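/- Let v ≥ 1 and let {T_0,…,T_{v−1}} be a uniform decomposition of a VOA(U_{2,3}, v) T, with T_i induced by subsets A_i, B_i ⊆ {0,…,v−1} satisfying |A_i|·|B_i| = v, each symbol appearing exactly once in the third column of T_i, and the sets A_i × B_i partitioning {0,…,v−1}². Then the pair (a, b) with a = log v − (1/v)·Σ_i log|B_i| and b = log v − (1/v)·Σ_i log|A_i| is entropic on the cone spanned by the rank functions of the wheel matroids W^{12}_2 and W^{13}_2: there exists a random vector (X1,X2,X3,X4) with entropy function a·r1 + b·r2. -/

import Mathlib

open Finset
open scoped BigOperators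
noncomputable section

/-- Probability that the `A`-marginal of the random vector with joint pmf `p`
takes the same value as on `x`. -/
def margProb {n : ℕ} {m : Fin n → ℕ} (p : (∀ i, Fin (m i)) → ℝ)
    (A : Finset (Fin n)) (x : ∀ i, Fin (m i)) : ℝ :=
  ∑ y : ∀ i, Fin (m i), if ∀ i ∈ A, y i = x i then p y else 0

/-- The Shannon entropy `H(X_A)` of the subvector indexed by `A`, for the random
vector with joint pmf `p`. -/
def jointEntropy {n : ℕ} {m : Fin n → ℕ} (p : (∀ i, Fin (m i)) → ℝ)
    (A : Finset (Fin n)) : ℝ :=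
  -∑ x : ∀ i, Fin (m i), p x * Real.log (margProb p A x)

/-- `p` is a probability mass function. -/
def IsPMF {α : Type*} [Fintype α] (p : α → ℝ) : Prop :=
  (∀ x, 0 ≤ p x) ∧ ∑ x, p x = 1

/-- `h` is an entropy function of degree `n`: it arises as `A ↦ H(X_A)` for a
random vector `(X_1, …, X_n)` on finite sets. -/
def IsEntropyFunc (n : ℕ) (h : Finset (Fin n) → ℝ) : Prop :=
  ∃ (m : Fin n → ℕ) (p : (∀ i, Fin (m i)) → ℝ), IsPMF p ∧ ∀ A, jointEntropy p A = h A

/-- Marginal probability of the single coordinate `i` taking value `x`. -/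
def marg1 {n : ℕ} {m : Fin n → ℕ} (p : (∀ i, Fin (m i)) → ℝ)
    (i : Fin n) (x : Fin (m i)) : ℝ :=
  ∑ y : ∀ j, Fin (m j), if y i = x then p y else 0

/-- Marginal probability of the pair of coordinates `(i, j)` taking values `(x, y)`. -/
def marg2 {n : ℕ} {m : Fin n → ℕ} (p : (∀ i, Fin (m i)) → ℝ)
    (i j : Fin n) (x : Fin (m i)) (y : Fin (m j)) : ℝ :=
  ∑ z : ∀ k, Fin (m k), if z i = x ∧ z j = y then p z else 0

/-- `T` is a `VOA(U_{2,3}, v)`: every ordered pair of symbols occurs exactly once in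
each pair of distinct columns. -/
def IsVOA23 (v : ℕ) (T : Fin (v ^ 2) → Fin 3 → Fin v) : Prop :=
  ∀ j k : Fin 3, j ≠ k → ∀ a b : Fin v,
    (Finset.univ.filter (fun r => T r j = a ∧ T r k = b)).card = 1

/-- Rank function of the wheel matroid `W^{12}_2` (indices `0,1` parallel). -/
def rW12 (A : Finset (Fin 4)) : ℝ :=
  if A = ∅ then 0 else if A ⊆ ({0, 1} : Finset (Fin 4)) then 1 else min 2 (A.card : ℝ)

/-- Rank function of the wheel matroid `W^{13}_2` (indices `0,2` parallel). -/
def rW13 (A : Finset (Fin 4)) : ℝ :=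
  if A = ∅ then 0 else if A ⊆ ({0, 2} : Finset (Fin 4)) then 1 else min 2 (A.card : ℝ)

/-
Let a row `r` of `T` be uniform and append its block index. For a uniformly distributed
`ω` and any `f`, the entropy of `(f ω)_S` is `log |Ω|` minus the average log-size of the fibre
of `ω` under the `S`-coordinates. In a `VOA(U_{2,3}, v)` any two columns determine the row, and
within a block the symbol determines the row; so every set of rank 2 in both wheels has
singleton fibres, each single coordinate has fibres of size `v`, and (block index, column)
has fibres `A i` or `B i`. Since `|A i| |B i| = v` these entropies are exactly
`a rW12 + b rW13`.
-/

section UniformPushforward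

variable {Ω : Type*} [Fintype Ω] {n : ℕ} {m : Fin n → ℕ}

def uniformPushforward (f : Ω → ∀ i, Fin (m i)) (z : ∀ i, Fin (m i)) : ℝ :=
  #{ω | f ω = z} / Fintype.card Ω

def fiberCard (f : Ω → ∀ i, Fin (m i)) (S : Finset (Fin n)) (ω : Ω) : ℕ :=
  #{ω' | ∀ i ∈ S, f ω' i = f ω i}

variable (f : Ω → ∀ i, Fin (m i))

theorem sum_uniformPushforward_mul (g : (∀ i, Fin (m i)) → ℝ) :
    ∑ z, uniformPushforward f z * g z = (∑ ω, g (f ω)) / Fintype.card Ω := by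
  rw [← Finset.sum_fiberwise univ f (fun ω => g (f ω)), Finset.sum_div]
  refine Finset.sum_congr rfl fun z _ => ?_
  rw [Finset.sum_congr rfl fun ω hω => by rw [(Finset.mem_filter.1 hω).2], Finset.sum_const,
    nsmul_eq_mul, uniformPushforward]
  ring

theorem isPMF_uniformPushforward [Nonempty Ω] : IsPMF (uniformPushforward f) := by
  refine ⟨fun z => by unfold uniformPushforward; positivity, ?_⟩
  simpa [Fintype.card_ne_zero] using sum_uniformPushforward_mul f 1

theorem margProb_uniformPushforward (S : Finset (Fin n)) (x : ∀ i, Fin (m i)) :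
    margProb (uniformPushforward f) S x = #{ω | ∀ i ∈ S, f ω i = x i} / Fintype.card Ω := by
  have h : margProb (uniformPushforward f) S x =
      ∑ z, uniformPushforward f z * if ∀ i ∈ S, z i = x i then 1 else 0 := by
    simp only [margProb, mul_ite, mul_one, mul_zero]
  rw [h, sum_uniformPushforward_mul, Finset.natCast_card_filter]

theorem fiberCard_pos (S : Finset (Fin n)) (ω : Ω) : 0 < fiberCard f S ω :=
  Finset.card_pos.2 ⟨ω, by simp⟩

theorem fiberCard_empty (ω : Ω) : fiberCard f ∅ ω = Fintype.card Ω := by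
  simp [fiberCard]

theorem fiberCard_eq_one {S : Finset (Fin n)} {ω : Ω}
    (h : ∀ ω', (∀ i ∈ S, f ω' i = f ω i) → ω' = ω) : fiberCard f S ω = 1 :=
  Finset.card_eq_one.2 ⟨ω, Finset.ext fun ω' => by
    simpa using ⟨h ω', by rintro rfl _ _; rfl⟩⟩

theorem jointEntropy_uniformPushforward [Nonempty Ω] (S : Finset (Fin n)) :
    jointEntropy (uniformPushforward f) S =
      Real.log (Fintype.card Ω) - (∑ ω, Real.log (fiberCard f S ω)) / Fintype.card Ω := by
  have hΩ : (Fintype.card Ω : ℝ) ≠ 0 := Nat.cast_ne_zero.2 Fintype.card_ne_zero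
  have hlog : ∀ ω, Real.log (margProb (uniformPushforward f) S (f ω)) =
      Real.log (fiberCard f S ω) - Real.log (Fintype.card Ω) := fun ω => by
    rw [margProb_uniformPushforward,
      ← Real.log_div (Nat.cast_ne_zero.2 (fiberCard_pos f S ω).ne') hΩ]
    rfl
  rw [jointEntropy, sum_uniformPushforward_mul, Finset.sum_congr rfl fun ω _ => hlog ω,
    Finset.sum_sub_distrib, Finset.sum_const, Finset.card_univ, nsmul_eq_mul]
  field_simp
  ring

theorem jointEntropy_uniformPushforward_of_fiberCard_eq [Nonempty Ω] {S : Finset (Fin n)} {c : ℕ}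
    (h : ∀ ω, fiberCard f S ω = c) :
    jointEntropy (uniformPushforward f) S = Real.log (Fintype.card Ω) - Real.log c := by
  rw [jointEntropy_uniformPushforward]
  simp only [h, Finset.sum_const, Finset.card_univ, nsmul_eq_mul]
  field_simp

theorem jointEntropy_uniformPushforward_empty [Nonempty Ω] :
    jointEntropy (uniformPushforward f) ∅ = 0 := by
  rw [jointEntropy_uniformPushforward_of_fiberCard_eq f (fiberCard_empty f), sub_self]

end UniformPushforward

theorem rW12_of_card_eq_one {S : Finset (Fin 4)} (h : #S = 1) : rW12 S = 1 := by
  have hS : S ≠ ∅ := by rintro rfl; simp at h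
  simp [rW12, hS, h]

theorem rW13_of_card_eq_one {S : Finset (Fin 4)} (h : #S = 1) : rW13 S = 1 := by
  have hS : S ≠ ∅ := by rintro rfl; simp at h
  simp [rW13, hS, h]

theorem rW12_of_subset {S : Finset (Fin 4)} (hS : S.Nonempty) (h : S ⊆ {0, 1}) : rW12 S = 1 := by
  simp [rW12, hS.ne_empty, h]

theorem rW13_of_subset {S : Finset (Fin 4)} (hS : S.Nonempty) (h : S ⊆ {0, 2}) : rW13 S = 1 := by
  simp [rW13, hS.ne_empty, h]

theorem rW12_of_two_le_card {S : Finset (Fin 4)} (h2 : 2 ≤ #S) (h : ¬S ⊆ {0, 1}) :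
    rW12 S = 2 := by
  have hS : S ≠ ∅ := by rintro rfl; simp at h2
  simpa [rW12, hS, h] using (show (2 : ℝ) ≤ #S by exact_mod_cast h2)

theorem rW13_of_two_le_card {S : Finset (Fin 4)} (h2 : 2 ≤ #S) (h : ¬S ⊆ {0, 2}) :
    rW13 S = 2 := by
  have hS : S ≠ ∅ := by rintro rfl; simp at h2
  simpa [rW13, hS, h] using (show (2 : ℝ) ≤ #S by exact_mod_cast h2)

theorem Finset.fin_four_cases (S : Finset (Fin 4)) :
    S = ∅ ∨ #S = 1 ∨ S = {0, 1} ∨ S = {0, 2} ∨ (2 ≤ #S ∧ ¬S ⊆ {0, 1} ∧ ¬S ⊆ {0, 2}) := by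
  revert S
  decide

theorem Finset.pair_subset_of_not_subset_fin_four (S : Finset (Fin 4)) (h2 : 2 ≤ #S)
    (h01 : ¬S ⊆ {0, 1}) (h02 : ¬S ⊆ {0, 2}) :
    {0, 3} ⊆ S ∨ {1, 2} ⊆ S ∨ {1, 3} ⊆ S ∨ {2, 3} ⊆ S := by
  revert S
  decide

namespace IsVOA23

variable {v : ℕ} {T : Fin (v ^ 2) → Fin 3 → Fin v}

theorem eq_of_col_eq_of_col_eq (hT : IsVOA23 v T) {j k : Fin 3} (hjk : j ≠ k) {r r' : Fin (v ^ 2)}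
    (hj : T r j = T r' j) (hk : T r k = T r' k) : r = r' :=
  Finset.card_le_one.1 (hT j k hjk (T r' j) (T r' k)).le r (by simp [hj, hk]) r' (by simp)

theorem card_filter_mem_and_eq (hT : IsVOA23 v T) {j k : Fin 3} (hjk : j ≠ k)
    (X : Finset (Fin v)) (b : Fin v) : #{r | T r j ∈ X ∧ T r k = b} = #X := by
  rw [Finset.card_eq_sum_card_fiberwise (f := fun r => T r j) (t := X)
    fun r hr => (Finset.mem_filter.1 hr).2.1, Finset.card_eq_sum_ones X]
  refine Finset.sum_congr rfl fun a ha => ?_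
  rw [Finset.filter_filter, ← hT j k hjk a b]
  congr 1
  exact Finset.filter_congr fun r _ => ⟨fun h => ⟨h.2, h.1.2⟩, fun h => ⟨⟨h.1 ▸ ha, h.2⟩, h.1⟩⟩

theorem card_filter_eq (hT : IsVOA23 v T) (k : Fin 3) (b : Fin v) : #{r | T r k = b} = v := by
  obtain ⟨j, hjk⟩ := exists_ne k
  simpa using hT.card_filter_mem_and_eq hjk univ b

end IsVOA23

section Decomposition

variable {v : ℕ} {T : Fin (v ^ 2) → Fin 3 → Fin v} {A B : Fin v → Finset (Fin v)}

def HasUniqueSymbolInBlocks (T : Fin (v ^ 2) → Fin 3 → Fin v) (A B : Fin v → Finset (Fin v)) :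
    Prop :=
  ∀ i s, #{r | T r 0 ∈ A i ∧ T r 1 ∈ B i ∧ T r 2 = s} = 1

theorem card_filter_mem_block (hunit : HasUniqueSymbolInBlocks T A B) (i : Fin v) :
    #{r | T r 0 ∈ A i ∧ T r 1 ∈ B i} = v := by
  rw [Finset.card_eq_sum_card_fiberwise (f := fun r => T r 2) (t := univ) fun _ _ => mem_univ _]
  simp [Finset.filter_filter, and_assoc, hunit i]

theorem eq_of_mem_block_of_col_two_eq (hunit : HasUniqueSymbolInBlocks T A B) {i : Fin v}
    {r r' : Fin (v ^ 2)} (hr : T r 0 ∈ A i ∧ T r 1 ∈ B i)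
    (hr' : T r' 0 ∈ A i ∧ T r' 1 ∈ B i) (h2 : T r 2 = T r' 2) : r = r' :=
  Finset.card_le_one.1 (hunit i (T r' 2)).le r (by simp [hr, h2]) r' (by simp [hr'])

end Decomposition

section WheelVector

variable {v : ℕ} {T : Fin (v ^ 2) → Fin 3 → Fin v} {A B : Fin v → Finset (Fin v)}
  {blk : Fin v → Fin v → Fin v}

-- Columns 0 and 1 of `T` go to coordinates 2 and 1: under this labelling the coefficient of
-- `rW12` is the one involving the `B i`.
def wheelVector (T : Fin (v ^ 2) → Fin 3 → Fin v) (blk : Fin v → Fin v → Fin v)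
    (r : Fin (v ^ 2)) : Fin 4 → Fin v :=
  ![blk (T r 0) (T r 1), T r 1, T r 0, T r 2]

theorem fiberCard_wheelVector_singleton (hT : IsVOA23 v T)
    (hblk : ∀ x y i, blk x y = i ↔ x ∈ A i ∧ y ∈ B i) (hunit : HasUniqueSymbolInBlocks T A B)
    (j : Fin 4) (r : Fin (v ^ 2)) : fiberCard (wheelVector T blk) {j} r = v := by
  simp only [fiberCard, Finset.mem_singleton, forall_eq]
  fin_cases j
  · simpa [wheelVector, hblk] using card_filter_mem_block hunit (blk (T r 0) (T r 1))
  · exact hT.card_filter_eq 1 (T r 1)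
  · exact hT.card_filter_eq 0 (T r 0)
  · exact hT.card_filter_eq 2 (T r 2)

theorem fiberCard_wheelVector_zero_one (hT : IsVOA23 v T)
    (hblk : ∀ x y i, blk x y = i ↔ x ∈ A i ∧ y ∈ B i) (r : Fin (v ^ 2)) :
    fiberCard (wheelVector T blk) {0, 1} r = #(A (blk (T r 0) (T r 1))) := by
  have hB := ((hblk (T r 0) (T r 1) _).1 rfl).2
  rw [← hT.card_filter_mem_and_eq (by decide : (0 : Fin 3) ≠ 1)]
  refine congrArg Finset.card (Finset.filter_congr fun r' _ => ?_)
  simp only [wheelVector, Finset.mem_insert, Finset.mem_singleton, forall_eq_or_imp, forall_eq]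
  simp only [Matrix.cons_val_zero, Matrix.cons_val_one, hblk]
  constructor
  · exact fun h => ⟨h.1.1, h.2⟩
  · exact fun h => ⟨⟨h.1, h.2 ▸ hB⟩, h.2⟩

theorem fiberCard_wheelVector_zero_two (hT : IsVOA23 v T)
    (hblk : ∀ x y i, blk x y = i ↔ x ∈ A i ∧ y ∈ B i) (r : Fin (v ^ 2)) :
    fiberCard (wheelVector T blk) {0, 2} r = #(B (blk (T r 0) (T r 1))) := by
  have hA := ((hblk (T r 0) (T r 1) _).1 rfl).1
  rw [← hT.card_filter_mem_and_eq (by decide : (1 : Fin 3) ≠ 0)]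
  refine congrArg Finset.card (Finset.filter_congr fun r' _ => ?_)
  simp only [wheelVector, Finset.mem_insert, Finset.mem_singleton, forall_eq_or_imp, forall_eq]
  simp only [Matrix.cons_val_zero, Matrix.cons_val_two, Matrix.tail_cons, Matrix.head_cons, hblk]
  constructor
  · exact fun h => ⟨h.1.2, h.2⟩
  · exact fun h => ⟨⟨h.2 ▸ hA, h.1⟩, h.2⟩

theorem fiberCard_wheelVector_eq_one (hT : IsVOA23 v T)
    (hblk : ∀ x y i, blk x y = i ↔ x ∈ A i ∧ y ∈ B i) (hunit : HasUniqueSymbolInBlocks T A B)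
    {S : Finset (Fin 4)} (h2 : 2 ≤ #S) (h01 : ¬S ⊆ {0, 1}) (h02 : ¬S ⊆ {0, 2})
    (r : Fin (v ^ 2)) : fiberCard (wheelVector T blk) S r = 1 := by
  refine fiberCard_eq_one _ fun r' hr' => ?_
  have col : ∀ {j k : Fin 4}, {j, k} ⊆ S →
      wheelVector T blk r' j = wheelVector T blk r j ∧
        wheelVector T blk r' k = wheelVector T blk r k := fun hjk =>
    ⟨hr' _ (hjk (by simp)), hr' _ (hjk (by simp))⟩
  rcases Finset.pair_subset_of_not_subset_fin_four S h2 h01 h02 with h | h | h | h <;>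
    obtain ⟨hj, hk⟩ := col h <;> simp [wheelVector] at hj hk
  · exact eq_of_mem_block_of_col_two_eq hunit ((hblk _ _ _).1 hj) ((hblk _ _ _).1 rfl) hk
  · exact hT.eq_of_col_eq_of_col_eq (by decide : (0 : Fin 3) ≠ 1) hk hj
  · exact hT.eq_of_col_eq_of_col_eq (by decide : (1 : Fin 3) ≠ 2) hj hk
  · exact hT.eq_of_col_eq_of_col_eq (by decide : (0 : Fin 3) ≠ 2) hj hk

theorem sum_comp_blk (hblk : ∀ x y i, blk x y = i ↔ x ∈ A i ∧ y ∈ B i)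
    (hunit : HasUniqueSymbolInBlocks T A B)
    (g : Fin v → ℝ) : ∑ r, g (blk (T r 0) (T r 1)) = v * ∑ i, g i := by
  rw [← Finset.sum_fiberwise univ (fun r => blk (T r 0) (T r 1)), Finset.mul_sum]
  refine Finset.sum_congr rfl fun i _ => ?_
  rw [Finset.sum_congr rfl fun r hr => by rw [(Finset.mem_filter.1 hr).2], Finset.sum_const,
    nsmul_eq_mul]
  simp only [hblk, card_filter_mem_block hunit]

end WheelVector

section WheelEntropy

variable {v : ℕ} [NeZero v] {T : Fin (v ^ 2) → Fin 3 → Fin v} {A B : Fin v → Finset (Fin v)}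
  {blk : Fin v → Fin v → Fin v}

theorem jointEntropy_wheelVector_singleton (hT : IsVOA23 v T)
    (hblk : ∀ x y i, blk x y = i ↔ x ∈ A i ∧ y ∈ B i) (hunit : HasUniqueSymbolInBlocks T A B)
    (j : Fin 4) : jointEntropy (uniformPushforward (wheelVector T blk)) {j} = Real.log v := by
  rw [jointEntropy_uniformPushforward_of_fiberCard_eq _
    (fiberCard_wheelVector_singleton hT hblk hunit j), Fintype.card_fin, Nat.cast_pow, Real.log_pow]
  ring

theorem jointEntropy_wheelVector_zero_one (hT : IsVOA23 v T)
    (hblk : ∀ x y i, blk x y = i ↔ x ∈ A i ∧ y ∈ B i) (hunit : HasUniqueSymbolInBlocks T A B) :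
    jointEntropy (uniformPushforward (wheelVector T blk)) {0, 1} =
      2 * Real.log v - (v : ℝ)⁻¹ * ∑ i, Real.log #(A i) := by
  rw [jointEntropy_uniformPushforward]
  simp only [fiberCard_wheelVector_zero_one hT hblk]
  rw [sum_comp_blk hblk hunit fun i => Real.log #(A i), Fintype.card_fin, Nat.cast_pow,
    Real.log_pow]
  field_simp
  ring

theorem jointEntropy_wheelVector_zero_two (hT : IsVOA23 v T)
    (hblk : ∀ x y i, blk x y = i ↔ x ∈ A i ∧ y ∈ B i) (hunit : HasUniqueSymbolInBlocks T A B) :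
    jointEntropy (uniformPushforward (wheelVector T blk)) {0, 2} =
      2 * Real.log v - (v : ℝ)⁻¹ * ∑ i, Real.log #(B i) := by
  rw [jointEntropy_uniformPushforward]
  simp only [fiberCard_wheelVector_zero_two hT hblk]
  rw [sum_comp_blk hblk hunit fun i => Real.log #(B i), Fintype.card_fin, Nat.cast_pow,
    Real.log_pow]
  field_simp
  ring

theorem jointEntropy_wheelVector_of_two_le_card (hT : IsVOA23 v T)
    (hblk : ∀ x y i, blk x y = i ↔ x ∈ A i ∧ y ∈ B i) (hunit : HasUniqueSymbolInBlocks T A B)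
    {S : Finset (Fin 4)} (h2 : 2 ≤ #S) (h01 : ¬S ⊆ {0, 1}) (h02 : ¬S ⊆ {0, 2}) :
    jointEntropy (uniformPushforward (wheelVector T blk)) S = 2 * Real.log v := by
  rw [jointEntropy_uniformPushforward_of_fiberCard_eq _
    (fiberCard_wheelVector_eq_one hT hblk hunit h2 h01 h02), Fintype.card_fin, Nat.cast_pow,
    Real.log_pow]
  simp

theorem inv_mul_sum_log_card_add (hcard : ∀ i, #(A i) * #(B i) = v) :
    (v : ℝ)⁻¹ * ∑ i, Real.log #(A i) + (v : ℝ)⁻¹ * ∑ i, Real.log #(B i) = Real.log v := by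
  have hlog : ∀ i, Real.log #(A i) + Real.log #(B i) = Real.log v := fun i => by
    have hA : #(A i) ≠ 0 := fun h => NeZero.ne v (by rw [← hcard i, h, zero_mul])
    have hB : #(B i) ≠ 0 := fun h => NeZero.ne v (by rw [← hcard i, h, mul_zero])
    rw [← Real.log_mul (by exact_mod_cast hA) (by exact_mod_cast hB), ← Nat.cast_mul, hcard]
  rw [← mul_add, ← Finset.sum_add_distrib, Finset.sum_congr rfl fun i _ => hlog i,
    Finset.sum_const, Finset.card_univ, Fintype.card_fin, nsmul_eq_mul,
    inv_mul_cancel_left₀ (NeZero.ne (v : ℝ))]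

end WheelEntropy

/-- Given a uniform decomposition `{T_0, …, T_{v-1}}` of a `VOA(U_{2,3}, v)` `T`
(each `T_i` induced by `A_i, B_i` with `|A_i|·|B_i| = v`, the sets `A_i × B_i`
partitioning `{0,…,v−1}²`, and each symbol occurring exactly once in the third
column of each `T_i`), the pair `(a, b)` with `a = log v − (1/v) Σ_i log |B_i|` and
`b = log v − (1/v) Σ_i log |A_i|` is entropic on the cone spanned by the rank
functions of `W^{12}_2` and `W^{13}_2`. -/
theorem statement14 (v : ℕ) (hv : 1 ≤ v)
    (T : Fin (v ^ 2) → Fin 3 → Fin v) (hT : IsVOA23 v T)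
    (A B : Fin v → Finset (Fin v))
    (hcard : ∀ i, (A i).card * (B i).card = v)
    (hpart : ∀ x y : Fin v, ∃! i : Fin v, x ∈ A i ∧ y ∈ B i)
    (hunit : ∀ (i : Fin v) (s : Fin v),
      (Finset.univ.filter (fun r => T r 0 ∈ A i ∧ T r 1 ∈ B i ∧ T r 2 = s)).card = 1) :
    ∃ (m : Fin 4 → ℕ) (p : (∀ i, Fin (m i)) → ℝ), IsPMF p ∧
      ∀ S : Finset (Fin 4), jointEntropy p S =
        (Real.log v - (v : ℝ)⁻¹ * ∑ i, Real.log ((B i).card : ℝ)) * rW12 S +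
        (Real.log v - (v : ℝ)⁻¹ * ∑ i, Real.log ((A i).card : ℝ)) * rW13 S := by
  have : NeZero v := ⟨by omega⟩
  choose blk hblk using fun x y => (hpart x y).exists
  have hblk_iff : ∀ x y i, blk x y = i ↔ x ∈ A i ∧ y ∈ B i := fun x y i =>
    ⟨fun h => h ▸ hblk x y, fun h => (hpart x y).unique (hblk x y) h⟩
  refine ⟨_, uniformPushforward (wheelVector T blk), isPMF_uniformPushforward _, fun S => ?_⟩
  have hlog := inv_mul_sum_log_card_add hcard
  rcases Finset.fin_four_cases S with rfl | h1 | rfl | rfl | ⟨h2, h01, h02⟩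
  · simp [jointEntropy_uniformPushforward_empty, rW12, rW13]
  · obtain ⟨j, rfl⟩ := Finset.card_eq_one.1 h1
    rw [jointEntropy_wheelVector_singleton hT hblk_iff hunit, rW12_of_card_eq_one h1,
      rW13_of_card_eq_one h1]
    linarith
  · rw [jointEntropy_wheelVector_zero_one hT hblk_iff hunit, rW12_of_subset (by simp) subset_rfl,
      rW13_of_two_le_card (by decide) (by decide)]
    linarith
  · rw [jointEntropy_wheelVector_zero_two hT hblk_iff hunit,
      rW12_of_two_le_card (by decide) (by decide), rW13_of_subset (by simp) subset_rfl]
    linarith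
  · rw [jointEntropy_wheelVector_of_two_le_card hT hblk_iff hunit h2 h01 h02,
      rW12_of_two_le_card h2 h01, rW13_of_two_le_card h2 h02]
    linarith
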